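/- Let π₁ : P¹(K) → P¹(L) be a nontrivial specialisation with O_K = {x : π₁([x:1]) ≠ [1:0]} and M_K = {x : π₁([x:1]) = [0:1]}. Then the residue field O_K/M_K is isomorphic to L: the composition L ↪ O_K → O_K/M_K is a ring isomorphism. -/
import Mathlib


/-- The projective line over `K`. -/
abbrev P1 (K : Type*) [Field K] := Projectivization K (Fin 2 → K)

/-- A point of `P¹(K)` lies in `P¹(L)` if it has a homogeneous coordinate vector with
entries in `L`. -/
def InL {K : Type*} [Field K] (L : Subfield K) (p : P1 K) : Prop :=
  ∃ (x : Fin 2 → K) (hx : x ≠ 0), (∀ i, x i ∈ L) ∧ p = Projectivization.mk K x hx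

/-- A family of multi-homogeneous polynomials (one block of two variables for each of the `m`
factors of `(P¹)^m`) with coefficients in `L`: a closed subvariety of `(P¹)^m` defined
over `L`. -/
def DefinedOver {K : Type*} [Field K] (L : Subfield K) {m : ℕ}
    (S : Set (MvPolynomial (Fin m × Fin 2) K)) : Prop :=
  ∀ p ∈ S, (∀ mon, MvPolynomial.coeff mon p ∈ L) ∧
    ∃ d : Fin m → ℕ,
      MvPolynomial.IsWeightedHomogeneous (fun q : Fin m × Fin 2 => Pi.single q.1 1) p d

/-- A tuple `a ∈ (P¹(K))^m` lies on the closed subvariety cut out by `S`. -/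
def Vanishes {K : Type*} [Field K] {m : ℕ}
    (S : Set (MvPolynomial (Fin m × Fin 2) K)) (a : Fin m → P1 K) : Prop :=
  ∃ x : Fin m → Fin 2 → K,
    (∀ k, ∃ h : x k ≠ 0, Projectivization.mk K (x k) h = a k) ∧
    ∀ p ∈ S, MvPolynomial.eval (fun q : Fin m × Fin 2 => x q.1 q.2) p = 0

/-- A specialisation `π₁ : P¹(K) → P¹(L)`: it lands in `P¹(L)`, fixes `P¹(L)` pointwise, and
preserves every closed algebraic subvariety of every Cartesian power of `P¹` defined
over `L`. -/
def IsSpecialisation {K : Type*} [Field K] (L : Subfield K) (π : P1 K → P1 K) : Prop :=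
  (∀ p, InL L (π p)) ∧ (∀ p, InL L p → π p = p) ∧
    ∀ (m : ℕ) (S : Set (MvPolynomial (Fin m × Fin 2) K)), DefinedOver L S →
      ∀ a : Fin m → P1 K, Vanishes S a → Vanishes S (π ∘ a)

/-- The point `[x : 1]` of `P¹(K)`. -/
def pt {K : Type*} [Field K] (x : K) : P1 K :=
  Projectivization.mk K ![x, 1] (by intro h; simpa using congrFun h 1)

/-- The point at infinity `[1 : 0]` of `P¹(K)`. -/
def inftyPt (K : Type*) [Field K] : P1 K :=
  Projectivization.mk K ![1, 0] (by intro h; simpa using congrFun h 0)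


section Helpers

variable {K : Type*} [Field K]

lemma pt_inj {x y : K} (h : pt x = pt y) : x = y := by
  rw [pt, pt, Projectivization.mk_eq_mk_iff] at h
  obtain ⟨a, ha⟩ := h
  have h1 := congrFun ha 1
  have h0 := congrFun ha 0
  simp [Units.smul_def] at h1 h0
  rw [h1] at h0; simp at h0; exact h0.symm

lemma pt_ne_infty (x : K) : pt x ≠ inftyPt K := by
  rw [pt, inftyPt, Ne, Projectivization.mk_eq_mk_iff]
  rintro ⟨a, ha⟩
  have h1 := congrFun ha 1
  simp [Units.smul_def] at h1

lemma inL_pt (L : Subfield K) {l : K} (hl : l ∈ L) : InL L (pt l) := by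
  refine ⟨![l, 1], (by intro h; simpa using congrFun h 1), ?_, rfl⟩
  intro i; fin_cases i <;> simp [hl, L.one_mem]

lemma exists_of_inL (L : Subfield K) {p : P1 K} (h : InL L p) (hne : p ≠ inftyPt K) :
    ∃ l ∈ L, p = pt l := by
  obtain ⟨x, hx, hmem, rfl⟩ := h
  by_cases h1 : x 1 = 0
  · exfalso
    apply hne
    have h0 : x 0 ≠ 0 := by
      intro h0; apply hx; funext i; fin_cases i <;> assumption
    rw [inftyPt, Projectivization.mk_eq_mk_iff]
    refine ⟨Units.mk0 (x 0) h0, ?_⟩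
    funext i; fin_cases i <;> simp [Units.smul_def, h1]
  · refine ⟨x 0 / x 1, L.div_mem (hmem 0) (hmem 1), ?_⟩
    rw [pt, Projectivization.mk_eq_mk_iff]
    refine ⟨Units.mk0 (x 1) h1, ?_⟩
    funext i; fin_cases i <;> simp [Units.smul_def]
    · field_simp

open MvPolynomial in
noncomputable def relP (K : Type*) [Field K] : MvPolynomial (Fin 3 × Fin 2) K :=
  X (0,0) * X (1,1) * X (2,1) - X (1,0) * X (0,1) * X (2,1) - X (2,0) * X (0,1) * X (1,1)

lemma relP_definedOver (L : Subfield K) : DefinedOver L {relP K} := by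
  intro p hp
  rw [Set.mem_singleton_iff] at hp
  subst hp
  constructor
  · intro mon
    simp only [relP, MvPolynomial.X, MvPolynomial.monomial_mul, MvPolynomial.coeff_sub,
      MvPolynomial.coeff_monomial, one_mul]
    refine L.sub_mem (L.sub_mem ?_ ?_) ?_ <;> (split_ifs <;> simp [L.one_mem, L.zero_mem])
  · refine ⟨fun _ => 1, ?_⟩
    rw [relP]
    have w := fun q : Fin 3 × Fin 2 => (Pi.single q.1 1 : Fin 3 → ℕ)
    have key : ∀ i j k : Fin 3, i ≠ j → j ≠ k → i ≠ k →
        (Pi.single i 1 + Pi.single j 1 + Pi.single k 1 : Fin 3 → ℕ) = fun _ => 1 := by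
      intro i j k hij hjk hik
      funext t
      fin_cases i <;> fin_cases j <;> fin_cases k <;> fin_cases t <;> simp_all [Pi.single_apply]
    have hm : ∀ i j k : Fin 3, i ≠ j → j ≠ k → i ≠ k →
        MvPolynomial.IsWeightedHomogeneous (fun q : Fin 3 × Fin 2 => Pi.single q.1 1)
          (MvPolynomial.X (i, 0) * MvPolynomial.X (j, 1) * MvPolynomial.X (k, 1) :
            MvPolynomial (Fin 3 × Fin 2) K) (fun _ => 1) := by
      intro i j k hij hjk hik
      rw [← key i j k hij hjk hik]
      exact ((MvPolynomial.isWeightedHomogeneous_X K _ (i, 0)).mul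
        (MvPolynomial.isWeightedHomogeneous_X K _ (j, 1))).mul
        (MvPolynomial.isWeightedHomogeneous_X K _ (k, 1))
    have s1 := hm 0 1 2 (by decide) (by decide) (by decide)
    have s2 := hm 1 0 2 (by decide) (by decide) (by decide)
    have s3 := hm 2 0 1 (by decide) (by decide) (by decide)
    rw [← MvPolynomial.mem_weightedHomogeneousSubmodule] at s1 s2 s3 ⊢
    exact Submodule.sub_mem _ (Submodule.sub_mem _ s1 s2) s3

lemma spec_sub (L : Subfield K) (π : P1 K → P1 K) (hπ : IsSpecialisation L π)
    {a b α β : K} (ha : π (pt a) = pt α) (hb : π (pt b) = pt β) :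
    π (pt (a - b)) = pt (α - β) := by
  have hvan : Vanishes {relP K} ![pt a, pt b, pt (a - b)] := by
    refine ⟨![![a, 1], ![b, 1], ![a - b, 1]], ?_, ?_⟩
    · intro k
      fin_cases k <;>
        exact ⟨by intro h; simpa [Matrix.vecHead, Matrix.vecTail] using congrFun h 1, rfl⟩
    · intro p hp
      rw [Set.mem_singleton_iff] at hp
      subst hp
      simp [relP, Matrix.vecHead, Matrix.vecTail]
      try ring
  have himg := hπ.2.2 3 {relP K} (relP_definedOver L) _ hvan
  obtain ⟨x, hx1, hx2⟩ := himg
  obtain ⟨hne0, hmk0⟩ := hx1 0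
  obtain ⟨hne1, hmk1⟩ := hx1 1
  obtain ⟨hne2, hmk2⟩ := hx1 2
  have e0 : (π ∘ ![pt a, pt b, pt (a - b)]) 0 = π (pt a) := rfl
  have e1 : (π ∘ ![pt a, pt b, pt (a - b)]) 1 = π (pt b) := rfl
  have e2 : (π ∘ ![pt a, pt b, pt (a - b)]) 2 = π (pt (a - b)) := rfl
  rw [e0] at hmk0; rw [e1] at hmk1; rw [e2] at hmk2
  rw [ha, pt, Projectivization.mk_eq_mk_iff] at hmk0
  rw [hb, pt, Projectivization.mk_eq_mk_iff] at hmk1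
  obtain ⟨u, hu⟩ := hmk0
  obtain ⟨w, hw⟩ := hmk1
  have hu0 : x 0 0 = u * α := by have := congrFun hu.symm 0; simpa [Units.smul_def] using this
  have hu1 : x 0 1 = (u : K) := by have := congrFun hu.symm 1; simpa [Units.smul_def] using this
  have hw0 : x 1 0 = w * β := by have := congrFun hw.symm 0; simpa [Units.smul_def] using this
  have hw1 : x 1 1 = (w : K) := by have := congrFun hw.symm 1; simpa [Units.smul_def] using this
  have heval := hx2 (relP K) rfl
  simp only [relP, map_sub, map_mul, MvPolynomial.eval_X] at heval
  rw [hu0, hu1, hw0, hw1] at heval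
  have hrel : x 2 0 = (α - β) * x 2 1 := by
    have h0 : (u : K) * w * ((α - β) * x 2 1 - x 2 0) = 0 := by linear_combination heval
    have h2 := (mul_eq_zero.1 h0).resolve_left (by simp [u.ne_zero, w.ne_zero])
    linear_combination -h2
  have h21 : x 2 1 ≠ 0 := by
    intro h
    apply hne2
    funext i
    fin_cases i
    · simpa [h] using hrel
    · exact h
  rw [← hmk2, pt, Projectivization.mk_eq_mk_iff]
  refine ⟨Units.mk0 (x 2 1) h21, ?_⟩
  funext i
  fin_cases i <;> simp [Units.smul_def, hrel, mul_comm]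

end Helpers

/-- For a nontrivial specialisation `π₁ : P¹(K) → P¹(L)`, the residue field `O_K/M_K` is
isomorphic to `L` via the composite `L ↪ O_K → O_K/M_K`: `L ⊆ O_K`, the map is injective
(`L ∩ M_K = 0`), and every `k ∈ O_K` is congruent mod `M_K` to a unique element of `L`. -/
theorem specialisation_residue_field {K : Type*} [Field K] (L : Subfield K)
    (π : P1 K → P1 K) (hπ : IsSpecialisation L π)
    (hnt : ∃ x y : K, x ≠ y ∧ π (pt x) = π (pt y) ∧ π (pt x) ≠ inftyPt K) :
    (∀ l : K, l ∈ L → π (pt l) ≠ inftyPt K) ∧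
      (∀ l : K, l ∈ L → π (pt l) = pt (0 : K) → l = 0) ∧
      (∀ k : K, π (pt k) ≠ inftyPt K → ∃! l : K, l ∈ L ∧ π (pt (k - l)) = pt (0 : K)) := by
  have hland := hπ.1; have hfix := hπ.2.1
  refine ⟨?_, ?_, ?_⟩
  · intro l hl
    rw [hfix (pt l) (inL_pt L hl)]
    exact pt_ne_infty l
  · intro l hl h
    rw [hfix (pt l) (inL_pt L hl)] at h
    exact pt_inj h
  · intro k hk
    obtain ⟨l, hlL, hkl⟩ := exists_of_inL L (hland (pt k)) hk
    have hlfix : π (pt l) = pt l := hfix (pt l) (inL_pt L hlL)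
    have hmain : π (pt (k - l)) = pt (0 : K) := by
      have := spec_sub L π hπ hkl hlfix
      simpa using this
    refine ⟨l, ⟨hlL, hmain⟩, ?_⟩
    rintro l' ⟨hl'L, hl'⟩
    have h1 : π (pt (k - l' - (k - l))) = pt ((0 : K) - 0) := spec_sub L π hπ hl' hmain
    rw [sub_sub_sub_cancel_left, sub_zero] at h1
    have h2 : π (pt (l - l')) = pt (l - l') :=
      hfix _ (inL_pt L (L.sub_mem hlL hl'L))
    have h3 : l - l' = 0 := pt_inj (h2.symm.trans h1)
    have := sub_eq_zero.mp h3
    exact this.symm
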